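/- For every natural number r ≥ 2, the kernel of the endomorphism of F_r = ℂ[α,β,γ]/J_r given by multiplication by (the class of) γ² equals the image of the ideal J_{r−2} under the quotient map ℂ[α,β,γ] → F_r. -/

import Mathlib

open MvPolynomial

/-- The triple (R¹_r, R²_r, R³_r) of polynomials in ℂ[α,β,γ] (α = X 0, β = X 1, γ = X 2). -/
noncomputable def Rr : ℕ → MvPolynomial (Fin 3) ℂ × MvPolynomial (Fin 3) ℂ × MvPolynomial (Fin 3) ℂ
  | 0 => (1, 0, 0)
  | (r + 1) =>
      (X 0 * (Rr r).1 + C ((r : ℂ) ^ 2) * (Rr r).2.1,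
       (X 1 + C ((-1 : ℂ) ^ (r + 1) * 8)) * (Rr r).1 + C ((2 * r : ℂ) / (r + 1)) * (Rr r).2.2,
       X 2 * (Rr r).1)

/-- The ideal J_r = (R¹_r, R²_r, R³_r) ⊆ ℂ[α,β,γ]. -/
noncomputable def Jr (r : ℕ) : Ideal (MvPolynomial (Fin 3) ℂ) :=
  Ideal.span {(Rr r).1, (Rr r).2.1, (Rr r).2.2}

/-!
Everything reduces to the colon identity `J_{s+1} : γ = J_s`, applied twice.

The inclusion `γ J_s ⊆ J_{s+1}` is read off the recursion, since the coefficients `s²` and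
`2s/(s+1)` are invertible for `s ≥ 1`. Conversely, write
`γ p = u R¹_{s+1} + v R²_{s+1} + w γ R¹_s`; then `(u, v)` is a syzygy of
`(R¹_{s+1}, R²_{s+1})` modulo `γ`. Modulo `γ` these become `q_{s+1}` and `(β ± 8) q_s` in
`ℂ[β][α]`, where `q_{s+2} = α q_{s+1} + (s+1)² (β ± 8) q_s`. Such a three-term recurrence makes every `q_s` monic
in `α` and consecutive `q_s` coprime, so the syzygy is Koszul modulo `γ`:
`(u, v) ≡ g (R²_{s+1}, -R¹_{s+1})`. The Koszul part cancels, leaving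
`p = a R¹_{s+1} + b R²_{s+1} + w R¹_s ∈ J_s`.
-/

namespace Polynomial

theorem Monic.isRelPrime_C {R : Type*} [CommRing R] [IsDomain R] {q : R[X]}
    (hq : q.Monic) {a : R} (ha : a ≠ 0) : IsRelPrime (C a) q := fun d hda hdq => by
  by_contra hd
  exact (degree_pos_of_not_isUnit_of_dvd_monic hq hd hdq).not_ge
    ((degree_le_of_dvd hda (C_ne_zero.2 ha)).trans degree_C_le)

variable {R : Type*} [CommRing R] {q : ℕ → R[X]} {e : ℕ → R}
  (h0 : q 0 = 1) (h1 : q 1 = X) (hrec : ∀ s, q (s + 2) = X * q (s + 1) + C (e s) * q s)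
include h0 h1 hrec

theorem isMonicOfDegree_of_three_term_recurrence [Nontrivial R] (s : ℕ) :
    IsMonicOfDegree (q s) s := by
  induction s using Nat.twoStepInduction with
  | zero => rw [h0]; exact isMonicOfDegree_zero_iff.2 rfl
  | one => rw [h1]; exact isMonicOfDegree_X R
  | more s ih ih' =>
    have hlow : (C (e s) * q s).natDegree < 1 + (s + 1) :=
      (natDegree_C_mul_le _ _).trans_lt (by rw [ih.natDegree_eq]; omega)
    rw [hrec, show s + 2 = 1 + (s + 1) by ring]
    exact ((isMonicOfDegree_X R).mul ih').add_right hlow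

theorem isRelPrime_succ_of_three_term_recurrence [IsDomain R] [UniqueFactorizationMonoid R]
    (he : ∀ s, e s ≠ 0) (s : ℕ) : IsRelPrime (q (s + 1)) (q s) := by
  induction s with
  | zero => rw [h0]; exact isRelPrime_one_right
  | succ s ih =>
    have hC : IsRelPrime (C (e s)) (q (s + 1)) :=
      (isMonicOfDegree_of_three_term_recurrence h0 h1 hrec (s + 1)).monic.isRelPrime_C (he s)
    rw [hrec, add_comm, mul_comm X]
    exact (hC.mul_left ih.symm).add_mul_left_left X

end Polynomial

theorem Ideal.mem_span_triple {R : Type*} [CommSemiring R] {a b c x : R} :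
    x ∈ Ideal.span {a, b, c} ↔ ∃ u v w, u * a + v * b + w * c = x := by
  simp only [Ideal.mem_span_insert, Ideal.mem_span_singleton']
  constructor
  · rintro ⟨u, _, ⟨v, _, ⟨w, rfl⟩, rfl⟩, rfl⟩
    exact ⟨u, v, w, by ring⟩
  · rintro ⟨u, v, w, rfl⟩
    exact ⟨u, _, ⟨v, _, ⟨w, rfl⟩, rfl⟩, by ring⟩

lemma MvPolynomial.mem_of_C_mul_mem {σ K : Type*} [Field K] {I : Ideal (MvPolynomial σ K)}
    {c : K} (hc : c ≠ 0) {p : MvPolynomial σ K} (h : C c * p ∈ I) : p ∈ I :=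
  (I.unit_mul_mem_iff_mem (hc.isUnit.map C)).1 h

/-- Setting `γ = 0` identifies `ℂ[α,β,γ]/(γ)` with `ℂ[β][α]`. -/
noncomputable def evalGammaZero :
    MvPolynomial (Fin 3) ℂ →ₐ[ℂ] Polynomial (Polynomial ℂ) :=
  aeval ![Polynomial.X, Polynomial.C Polynomial.X, 0]

noncomputable def embedAlphaBeta : Polynomial (Polynomial ℂ) →+* MvPolynomial (Fin 3) ℂ :=
  Polynomial.eval₂RingHom (Polynomial.eval₂RingHom C (X 1)) (X 0)

@[simp] lemma evalGammaZero_X_zero : evalGammaZero (X 0) = Polynomial.X := by simp [evalGammaZero]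
@[simp] lemma evalGammaZero_X_one : evalGammaZero (X 1) = Polynomial.C Polynomial.X := by
  simp [evalGammaZero]
@[simp] lemma evalGammaZero_X_two : evalGammaZero (X 2) = 0 := by simp [evalGammaZero]
@[simp] lemma evalGammaZero_C (c : ℂ) :
    evalGammaZero (C c) = Polynomial.C (Polynomial.C c) := by
  simp [evalGammaZero]

lemma evalGammaZero_embedAlphaBeta (b : Polynomial (Polynomial ℂ)) :
    evalGammaZero (embedAlphaBeta b) = b := by
  suffices (evalGammaZero : _ →+* _).comp embedAlphaBeta = RingHom.id _ from
    RingHom.congr_fun this b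
  apply Polynomial.ringHom_ext'
  · apply Polynomial.ringHom_ext <;> simp [embedAlphaBeta]
  · simp [embedAlphaBeta]

lemma X_two_dvd_sub_iff {u v : MvPolynomial (Fin 3) ℂ} :
    X 2 ∣ u - v ↔ evalGammaZero u = evalGammaZero v := by
  constructor
  · rintro ⟨w, hw⟩
    rw [← sub_eq_zero, ← map_sub, hw, map_mul, evalGammaZero_X_two, zero_mul]
  · intro h
    have hmk : (Ideal.Quotient.mk (Ideal.span {X 2})).comp
        (embedAlphaBeta.comp (evalGammaZero : _ →+* _)) = Ideal.Quotient.mk _ := by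
      refine MvPolynomial.ringHom_ext (fun c => by simp [embedAlphaBeta]) fun i => ?_
      fin_cases i <;> simp [embedAlphaBeta]
    rw [← Ideal.mem_span_singleton, ← Ideal.Quotient.eq, ← RingHom.congr_fun hmk u,
      ← RingHom.congr_fun hmk v]
    simp [h]

lemma R1_succ (s : ℕ) : (Rr (s + 1)).1 = X 0 * (Rr s).1 + C ((s : ℂ) ^ 2) * (Rr s).2.1 := rfl

lemma R2_succ (s : ℕ) : (Rr (s + 1)).2.1 =
    (X 1 + C ((-1 : ℂ) ^ (s + 1) * 8)) * (Rr s).1 + C ((2 * s : ℂ) / (s + 1)) * (Rr s).2.2 :=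
  rfl

lemma R3_succ (s : ℕ) : (Rr (s + 1)).2.2 = X 2 * (Rr s).1 := rfl

noncomputable def shiftedBeta (k : ℕ) : Polynomial ℂ :=
  Polynomial.X + Polynomial.C ((-1 : ℂ) ^ k * 8)

lemma shiftedBeta_ne_zero (k : ℕ) : shiftedBeta k ≠ 0 := (Polynomial.monic_X_add_C _).ne_zero

lemma evalGammaZero_R3 (s : ℕ) : evalGammaZero (Rr s).2.2 = 0 := by
  cases s with
  | zero => exact map_zero _
  | succ s => rw [R3_succ, map_mul, evalGammaZero_X_two, zero_mul]

lemma evalGammaZero_R2_succ (s : ℕ) :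
    evalGammaZero (Rr (s + 1)).2.1 =
      Polynomial.C (shiftedBeta (s + 1)) * evalGammaZero (Rr s).1 := by
  simp [R2_succ, evalGammaZero_R3, shiftedBeta]

lemma evalGammaZero_R1_add_two (s : ℕ) :
    evalGammaZero (Rr (s + 2)).1 = Polynomial.X * evalGammaZero (Rr (s + 1)).1 +
      Polynomial.C (Polynomial.C (((s + 1 : ℕ) : ℂ) ^ 2) * shiftedBeta (s + 1)) *
        evalGammaZero (Rr s).1 := by
  rw [R1_succ, map_add, map_mul, map_mul, evalGammaZero_R2_succ]
  simp only [evalGammaZero_X_zero, evalGammaZero_C, map_mul]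
  ring

lemma evalGammaZero_R1_zero : evalGammaZero (Rr 0).1 = 1 := map_one _

lemma evalGammaZero_R1_one : evalGammaZero (Rr 1).1 = Polynomial.X := by
  simp [R1_succ 0, evalGammaZero_R1_zero]

lemma isMonicOfDegree_evalGammaZero_R1 (s : ℕ) : (evalGammaZero (Rr s).1).IsMonicOfDegree s :=
  Polynomial.isMonicOfDegree_of_three_term_recurrence (q := fun s => evalGammaZero (Rr s).1)
    evalGammaZero_R1_zero evalGammaZero_R1_one evalGammaZero_R1_add_two s

lemma isRelPrime_evalGammaZero_R1_R2 (s : ℕ) :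
    IsRelPrime (evalGammaZero (Rr (s + 1)).1) (evalGammaZero (Rr (s + 1)).2.1) := by
  have he (k : ℕ) : Polynomial.C (((k + 1 : ℕ) : ℂ) ^ 2) * shiftedBeta (k + 1) ≠ 0 :=
    mul_ne_zero (by simp [Nat.cast_add_one_ne_zero]) (shiftedBeta_ne_zero _)
  have hβ := (isMonicOfDegree_evalGammaZero_R1 (s + 1)).monic.isRelPrime_C
    (shiftedBeta_ne_zero (s + 1))
  rw [evalGammaZero_R2_succ]
  exact hβ.symm.mul_right
    (Polynomial.isRelPrime_succ_of_three_term_recurrence (q := fun s => evalGammaZero (Rr s).1)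
      evalGammaZero_R1_zero evalGammaZero_R1_one evalGammaZero_R1_add_two he s)

lemma R1_mem_Jr (s : ℕ) : (Rr s).1 ∈ Jr s := Ideal.subset_span (by simp)

lemma R2_mem_Jr (s : ℕ) : (Rr s).2.1 ∈ Jr s := Ideal.subset_span (by simp)

lemma R3_mem_Jr (s : ℕ) : (Rr s).2.2 ∈ Jr s := Ideal.subset_span (by simp)

lemma Jr_succ_le (s : ℕ) : Jr (s + 1) ≤ Jr s := by
  simp only [Jr, Ideal.span_le, Set.insert_subset_iff, Set.singleton_subset_iff, SetLike.mem_coe]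
  refine ⟨?_, ?_, ?_⟩
  · rw [R1_succ]
    exact add_mem (Ideal.mul_mem_left _ _ (R1_mem_Jr s)) (Ideal.mul_mem_left _ _ (R2_mem_Jr s))
  · rw [R2_succ]
    exact add_mem (Ideal.mul_mem_left _ _ (R1_mem_Jr s)) (Ideal.mul_mem_left _ _ (R3_mem_Jr s))
  · rw [R3_succ]
    exact Ideal.mul_mem_left _ _ (R1_mem_Jr s)

lemma Jr_le_colon (s : ℕ) : Jr s ≤ (Jr (s + 1)).colon {X 2} := by
  simp only [Jr, Ideal.span_le, Set.insert_subset_iff, Set.singleton_subset_iff, SetLike.mem_coe,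
    Submodule.mem_colon_singleton, smul_eq_mul]
  refine ⟨mul_comm (Rr s).1 (X 2) ▸ R3_mem_Jr (s + 1), ?_, ?_⟩
  · cases s with
    | zero => simp [Rr]
    | succ k =>
      refine mem_of_C_mul_mem (pow_ne_zero 2 (Nat.cast_add_one_ne_zero k)) ?_
      rw [show C (((k : ℂ) + 1) ^ 2) * ((Rr (k + 1)).2.1 * X 2)
          = X 2 * (Rr (k + 2)).1 - X 0 * (Rr (k + 2)).2.2 by rw [R1_succ, R3_succ]; push_cast; ring]
      exact sub_mem (Ideal.mul_mem_left _ _ (R1_mem_Jr _)) (Ideal.mul_mem_left _ _ (R3_mem_Jr _))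
  · cases s with
    | zero => simp [Rr]
    | succ k =>
      refine mem_of_C_mul_mem (c := 2 * ((k : ℂ) + 1) / ((k : ℂ) + 1 + 1))
        (div_ne_zero (mul_ne_zero two_ne_zero (Nat.cast_add_one_ne_zero k))
          (by exact_mod_cast (k + 1).succ_ne_zero)) ?_
      rw [show C (2 * ((k : ℂ) + 1) / ((k : ℂ) + 1 + 1)) * ((Rr (k + 1)).2.2 * X 2)
          = X 2 * (Rr (k + 2)).2.1 - (X 1 + C ((-1 : ℂ) ^ (k + 2) * 8)) * (Rr (k + 2)).2.2 by
        rw [R2_succ (k + 1), R3_succ (k + 1)]; push_cast; ring]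
      exact sub_mem (Ideal.mul_mem_left _ _ (R2_mem_Jr _)) (Ideal.mul_mem_left _ _ (R3_mem_Jr _))

lemma exists_syzygy_mod_X_two (s : ℕ) {u v : MvPolynomial (Fin 3) ℂ}
    (h : X 2 ∣ u * (Rr (s + 1)).1 + v * (Rr (s + 1)).2.1) :
    ∃ g, X 2 ∣ u + g * (Rr (s + 1)).2.1 ∧ X 2 ∣ v - g * (Rr (s + 1)).1 := by
  rw [← sub_zero (_ + _), X_two_dvd_sub_iff, map_zero, map_add, map_mul, map_mul] at h
  obtain ⟨g, hg⟩ : evalGammaZero (Rr (s + 1)).1 ∣ evalGammaZero v :=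
    (isRelPrime_evalGammaZero_R1_R2 s).dvd_of_dvd_mul_right
      ⟨-evalGammaZero u, by linear_combination h⟩
  have hu : evalGammaZero u = -(g * evalGammaZero (Rr (s + 1)).2.1) :=
    mul_right_cancel₀ (isMonicOfDegree_evalGammaZero_R1 (s + 1)).ne_zero
      (by linear_combination h - evalGammaZero (Rr (s + 1)).2.1 * hg)
  refine ⟨embedAlphaBeta g, ?_, ?_⟩
  · rw [← sub_neg_eq_add, X_two_dvd_sub_iff]
    simp [hu, evalGammaZero_embedAlphaBeta]
  · rw [X_two_dvd_sub_iff]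
    simp [hg, evalGammaZero_embedAlphaBeta, mul_comm]

lemma colon_Jr_succ_le (s : ℕ) : (Jr (s + 1)).colon {X 2} ≤ Jr s := by
  intro p hp
  rw [Submodule.mem_colon_singleton, smul_eq_mul, Jr, Ideal.mem_span_triple, R3_succ] at hp
  obtain ⟨u, v, w, huvw⟩ := hp
  obtain ⟨g, ⟨a, ha⟩, ⟨b, hb⟩⟩ :=
    exists_syzygy_mod_X_two s (u := u) (v := v) ⟨p - w * (Rr s).1, by linear_combination huvw⟩
  have hp : p = a * (Rr (s + 1)).1 + b * (Rr (s + 1)).2.1 + w * (Rr s).1 :=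
    mul_left_cancel₀ (X_ne_zero (R := ℂ) 2)
      (by linear_combination -huvw + (Rr (s + 1)).1 * ha + (Rr (s + 1)).2.1 * hb)
  rw [hp]
  exact add_mem (add_mem (Ideal.mul_mem_left _ _ (Jr_succ_le s (R1_mem_Jr _)))
    (Ideal.mul_mem_left _ _ (Jr_succ_le s (R2_mem_Jr _)))) (Ideal.mul_mem_left _ _ (R1_mem_Jr s))

theorem colon_Jr_succ (s : ℕ) : (Jr (s + 1)).colon {X 2} = Jr s :=
  le_antisymm (colon_Jr_succ_le s) (Jr_le_colon s)

/-- For every r ≥ 2, the kernel of the endomorphism of F_r = ℂ[α,β,γ]/J_r given by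
multiplication by (the class of) γ² equals the image of the ideal J_{r−2} under the quotient
map ℂ[α,β,γ] → F_r. -/
theorem stmt12 (r : ℕ) (hr : 2 ≤ r) :
    {x : MvPolynomial (Fin 3) ℂ ⧸ Jr r | (Ideal.Quotient.mk (Jr r) (X 2)) ^ 2 * x = 0}
      = (Ideal.Quotient.mk (Jr r)) '' (Jr (r - 2)) := by
  obtain ⟨s, rfl⟩ := Nat.exists_eq_add_of_le' hr
  have key (p : MvPolynomial (Fin 3) ℂ) : X 2 ^ 2 * p ∈ Jr (s + 2) ↔ p ∈ Jr s := by
    rw [← colon_Jr_succ s, ← colon_Jr_succ (s + 1), Submodule.mem_colon_singleton,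
      Submodule.mem_colon_singleton, smul_eq_mul, smul_eq_mul, mul_assoc, mul_comm, ← sq]
  rw [Nat.add_sub_cancel]
  ext x
  constructor
  · obtain ⟨p, rfl⟩ := Ideal.Quotient.mk_surjective x
    intro hx
    rw [Set.mem_ofPred_eq, ← map_pow, ← map_mul, Ideal.Quotient.eq_zero_iff_mem, key] at hx
    exact ⟨p, hx, rfl⟩
  · rintro ⟨p, hp, rfl⟩
    rw [Set.mem_ofPred_eq, ← map_pow, ← map_mul, Ideal.Quotient.eq_zero_iff_mem, key]
    exact hp
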